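/- arXiv:2208.02691 — 2 statements merged into one kernel-verified Lean document; each statement's English description precedes it below -/
import Mathlib

section
/- Let Q ≥ 1 and let l ∈ ℕ satisfy 2^l > Q^(Q · Q^(2Q)). Then there exist two distinct binary words a, b of length l that are Q-indistinguishable, i.e., for every transition function δ : S × {0,1} → S on a set S of size Q and every state s ∈ S, reading a from s and reading b from s lead to the same state. -/
/-!
A word `x` acts on a finite state set `σ` through the map `(δ, s) ↦ x.foldl δ s`, and there are
only `Q ^ (Q * Q ^ (2 * Q))` such maps when `σ = Fin Q` and the alphabet is `Bool`. With more
words of length `l` than that, two of them induce the same map (pigeonhole), and every state set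
of size `Q` is a relabelling of `Fin Q`.
-/

/-- Binary words `x` and `y` are `Q`-indistinguishable: for every set `S` of size `Q`,
every transition function `δ : S → {0,1} → S` and every start state `s`, reading `x`
from `s` and reading `y` from `s` lead to the same state. -/
def QIndist (Q : ℕ) (x y : List Bool) : Prop :=
  ∀ (S : Type) (_ : Fintype S), Fintype.card S = Q →
    ∀ (δ : S → Bool → S) (s : S), x.foldl δ s = y.foldl δ s

theorem List.foldl_eq_foldl_of_equiv {α S T : Type*} (e : S ≃ T) {x y : List α}
    (h : ∀ (δ : T → α → T) (t : T), x.foldl δ t = y.foldl δ t) (δ : S → α → S) (s : S) :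
    x.foldl δ s = y.foldl δ s := by
  set δ' : T → α → T := fun t a => e (δ (e.symm t) a)
  have hδ' : ∀ s a, δ' (e s) a = e (δ s a) := by simp [δ']
  apply e.injective
  rw [← List.foldl_hom e hδ', ← List.foldl_hom e hδ', h]

theorem qIndist_of_forall_fin {Q : ℕ} {x y : List Bool}
    (h : ∀ (δ : Fin Q → Bool → Fin Q) (s : Fin Q), x.foldl δ s = y.foldl δ s) :
    QIndist Q x y :=
  fun _ _ hS => List.foldl_eq_foldl_of_equiv (Fintype.equivFinOfCardEq hS) h

theorem exists_ne_foldl_eq_of_card_lt {α σ : Type*} [Fintype α] [Fintype σ] (l : ℕ)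
    (hl : Fintype.card σ ^ ((Fintype.card σ ^ Fintype.card α) ^ Fintype.card σ * Fintype.card σ)
      < Fintype.card α ^ l) :
    ∃ x y : List α, x.length = l ∧ y.length = l ∧ x ≠ y ∧
      ∀ (δ : σ → α → σ) (s : σ), x.foldl δ s = y.foldl δ s := by
  classical
  let action : (Fin l → α) → (σ → α → σ) × σ → σ := fun v p => (List.ofFn v).foldl p.1 p.2
  have hcard : Fintype.card ((σ → α → σ) × σ → σ) < Fintype.card (Fin l → α) := by
    simpa only [Fintype.card_fun, Fintype.card_prod, Fintype.card_fin] using hl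
  obtain ⟨v, w, hvw, hvw'⟩ := Fintype.exists_ne_map_eq_of_card_lt action hcard
  exact ⟨List.ofFn v, List.ofFn w, List.length_ofFn, List.length_ofFn,
    List.ofFn_injective.ne hvw, fun δ s => congrFun hvw' (δ, s)⟩

theorem exists_indistinguishable_pair_general (Q l : ℕ)
    (hl : Q ^ (Q * Q ^ (2 * Q)) < 2 ^ l) :
    ∃ a b : List Bool, a.length = l ∧ b.length = l ∧ a ≠ b ∧ QIndist Q a b := by
  have hl' : Fintype.card (Fin Q) ^
      ((Fintype.card (Fin Q) ^ Fintype.card Bool) ^ Fintype.card (Fin Q) * Fintype.card (Fin Q))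
      < Fintype.card Bool ^ l := by
    simpa only [Fintype.card_fin, Fintype.card_bool, ← pow_mul, mul_comm] using hl
  obtain ⟨a, b, ha, hb, hab, hfoldl⟩ := exists_ne_foldl_eq_of_card_lt l hl'
  exact ⟨a, b, ha, hb, hab, qIndist_of_forall_fin hfoldl⟩

theorem exists_indistinguishable_pair (Q l : ℕ) (hQ : 1 ≤ Q)
    (hl : Q ^ (Q * Q ^ (2 * Q)) < 2 ^ l) :
    ∃ a b : List Bool, a.length = l ∧ b.length = l ∧ a ≠ b ∧ QIndist Q a b :=
  exists_indistinguishable_pair_general Q l hl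
end

section
/- There exist two infinite sequences of bits I⁰ = {I⁰_n}_{n=0}^∞ ∈ {0,1}^ω and I¹ = {I¹_n}_{n=0}^∞ ∈ {0,1}^ω such that for every Q ∈ ℕ there exist t ∈ ℕ and two Q-indistinguishable binary words x = x_0…x_{t−1} and y = y_0…y_{t−1} of length t with I^{x_0}_0 ⊕ … ⊕ I^{x_{t−1}}_{t−1} ≠ I^{y_0}_0 ⊕ … ⊕ I^{y_{t−1}}_{t−1}, where ⊕ denotes XOR. -/
/-- Given two bit sequences `I false, I true : ℕ → Bool` and a word `w = w_0 … w_{t−1}`,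
this is the XOR `I^{w_0}_0 ⊕ … ⊕ I^{w_{t−1}}_{t−1}`. -/
def xorSum (I : Bool → ℕ → Bool) (w : List Bool) : Bool :=
  (w.zipIdx.map (fun q => I q.1 q.2)).foldl xor false

open Function Fintype
open scoped Nat

namespace Function

variable {α : Type*} [Fintype α]

theorem iterate_mem_periodicPts_of_card_le (f : α → α) (x : α) {n : ℕ} (hn : card α ≤ n) :
    f^[n] x ∈ periodicPts f := by
  have of_repeat (i j : ℕ) (hij : i < j) (hj : j ≤ card α) (h : f^[i] x = f^[j] x) :
      f^[n] x ∈ periodicPts f := by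
    have hper : IsPeriodicPt f (j - i) (f^[i] x) := by
      change f^[j - i] (f^[i] x) = f^[i] x
      rw [← iterate_add_apply, Nat.sub_add_cancel hij.le, h]
    have := hper.apply_iterate (n - i)
    rw [← iterate_add_apply, Nat.sub_add_cancel (by omega)] at this
    exact mk_mem_periodicPts (by omega) this
  obtain ⟨i, j, hne, heq⟩ :=
    Fintype.exists_ne_map_eq_of_card_lt (fun i : Fin (card α + 1) => f^[i] x) (by simp)
  rcases hne.lt_or_gt with h | h
  · exact of_repeat i j h (by omega) heq
  · exact of_repeat j i h (by omega) heq.symm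

theorem iterate_add_eq_of_factorial_card_dvd (f : α → α) (x : α) {m n : ℕ}
    (hn : card α ≤ n) (hm : (card α)! ∣ m) : f^[m + n] x = f^[n] x := by
  obtain ⟨k, rfl⟩ := hm
  rw [iterate_add_apply]
  exact (isPeriodicPt_factorial_card_of_mem_periodicPts
    (iterate_mem_periodicPts_of_card_le f x hn)).mul_const k

end Function

theorem List.foldl_replicate_eq_iterate {α β : Type*} (f : α → β → α) (b : β) (n : ℕ) (a : α) :
    (List.replicate n b).foldl f a = (f · b)^[n] a := by
  induction n generalizing a with
  | zero => rfl
  | succ n ih => rw [List.replicate_succ, List.foldl_cons, ih, iterate_succ_apply]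

theorem qIndist_replicate_append_swap {Q m n : ℕ} (hn : Q ≤ n) (hm : Q ! ∣ m) (c : Bool)
    (w : List Bool) :
    QIndist Q (List.replicate n c ++ w ++ List.replicate (m + n) c)
      (List.replicate (m + n) c ++ w ++ List.replicate n c) := by
  rintro S _ rfl δ s
  simp only [List.foldl_append, List.foldl_replicate_eq_iterate,
    iterate_add_eq_of_factorial_card_dvd _ _ hn hm]

theorem List.foldl_xor_replicate_false (n : ℕ) (b : Bool) :
    (List.replicate n false).foldl xor b = b := by
  rw [List.foldl_replicate_eq_iterate]
  exact iterate_fixed (Bool.xor_false b) n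

theorem xorSum_replicate_false_append {I : Bool → ℕ → Bool} (hI : I false = fun _ => false)
    (a b : ℕ) : xorSum I (List.replicate a false ++ true :: List.replicate b false) = I true a := by
  have map_zeros (k i : ℕ) :
      ((List.replicate k false).zipIdx i).map (fun q => I q.1 q.2) = List.replicate k false := by
    refine List.eq_replicate_iff.2 ⟨by simp, fun c hc => ?_⟩
    obtain ⟨q, hq, rfl⟩ := List.mem_map.1 hc
    rw [List.eq_of_mem_replicate (List.fst_mem_of_mem_zipIdx hq), hI]
  simp [xorSum, List.zipIdx_append, map_zeros, List.foldl_xor_replicate_false]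

theorem Nat.factorial_add_factorial_notMem_range {N : ℕ} (hN : 2 ≤ N) :
    N ! + N ! ∉ Set.range Nat.factorial := by
  rintro ⟨m, hm⟩
  have hpos := N.factorial_pos
  have hlt : N ! < m ! := by omega
  have hgt : m ! < (N + 1)! := by rw [Nat.factorial_succ, hm]; nlinarith
  rw [Nat.factorial_lt (by omega)] at hlt
  rw [Nat.factorial_lt (by omega)] at hgt
  omega

open Classical in
noncomputable def factorialBits (b : Bool) (n : ℕ) : Bool :=
  b && decide (n ∈ Set.range Nat.factorial)

theorem exists_sequences_fooling_all_automata :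
    ∃ I : Bool → ℕ → Bool, ∀ Q : ℕ, ∃ (t : ℕ) (x y : List Bool),
      x.length = t ∧ y.length = t ∧ QIndist Q x y ∧ xorSum I x ≠ xorSum I y := by
  refine ⟨factorialBits, fun Q => ?_⟩
  set a := (Q + 2)! with ha
  have hQa : Q ≤ a := (Nat.self_le_factorial _).trans' (by omega)
  have hdvd : Q ! ∣ a := Nat.factorial_dvd_factorial (by omega)
  have hzero : factorialBits false = fun _ => false := rfl
  refine ⟨a + 1 + (a + a), List.replicate a false ++ true :: List.replicate (a + a) false,
    List.replicate (a + a) false ++ true :: List.replicate a false, by simp; omega, by simp; omega,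
    by simpa using qIndist_replicate_append_swap hQa hdvd false [true], ?_⟩
  rw [xorSum_replicate_false_append hzero, xorSum_replicate_false_append hzero]
  simp [factorialBits, ha, Nat.factorial_add_factorial_notMem_range (N := Q + 2) (by omega)]
end
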